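/- Let s = (s₁,s₂,s₃) ∈ ℝ³ with s₁,s₂,s₃ > 0. Then for each r = 1,2,3 (indices mod 3), the determinant of the 2×2 real symmetric matrix with rows (4s_{r+1}, -S(s)/s_r + 2a_r⁰(s)) and (-S(s)/s_r + 2a_r⁰(s), 4s_{r+2}) equals 4S(s)(s_{r+1}-s_{r+2})²/s_r². -/
import Mathlib

open Matrix

/-- `S(s) = 2(s₁s₂+s₁s₃+s₂s₃) - (s₁²+s₂²+s₃²)`. -/
noncomputable def Spoly (s : Fin 3 → ℝ) : ℝ :=
  2 * (s 0 * s 1 + s 0 * s 2 + s 1 * s 2) - (s 0 ^ 2 + s 1 ^ 2 + s 2 ^ 2)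

/-- `p_r(s) = (s_{r+1}-s_{r+2})² + 2 s_r (s_{r+1}+s_{r+2}) - 3 s_r²`, indices mod 3. -/
noncomputable def ppoly (s : Fin 3 → ℝ) (r : Fin 3) : ℝ :=
  (s (r + 1) - s (r + 2)) ^ 2 + 2 * s r * (s (r + 1) + s (r + 2)) - 3 * s r ^ 2

/-- `a_r⁰(s) = ((s_{r+1}-s_{r+2})² - s_r²)/(2 s_r)`, indices mod 3. -/
noncomputable def a0 (s : Fin 3 → ℝ) (r : Fin 3) : ℝ :=
  ((s (r + 1) - s (r + 2)) ^ 2 - s r ^ 2) / (2 * s r)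

lemma key (x y z : ℝ) (hx : x ≠ 0)
    (S : ℝ) (hS : S = 2 * (x * y + x * z + y * z) - (x ^ 2 + y ^ 2 + z ^ 2)) :
    4 * y * (4 * z) - (-S / x + 2 * (((y - z) ^ 2 - x ^ 2) / (2 * x))) *
      (-S / x + 2 * (((y - z) ^ 2 - x ^ 2) / (2 * x)))
      = 4 * S * (y - z) ^ 2 / x ^ 2 := by
  subst hS
  field_simp
  ring

/-- The determinant of the 2×2 block of the modified curvature operator of `(W¹², g_s)`
with 4-form `ω₀` (i.e. `b = 0`) equals `4 S(s) (s_{r+1}-s_{r+2})² / s_r²`. -/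
theorem det_block_W12 (s : Fin 3 → ℝ) (hs : ∀ r, 0 < s r) :
    ∀ r : Fin 3,
      (!![4 * s (r + 1),                     -Spoly s / s r + 2 * a0 s r;
          -Spoly s / s r + 2 * a0 s r,       4 * s (r + 2)] : Matrix (Fin 2) (Fin 2) ℝ).det
        = 4 * Spoly s * (s (r + 1) - s (r + 2)) ^ 2 / s r ^ 2 := by
  intro r
  have hS : Spoly s = 2 * (s r * s (r + 1) + s r * s (r + 2) + s (r + 1) * s (r + 2))
      - (s r ^ 2 + s (r + 1) ^ 2 + s (r + 2) ^ 2) := by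
    fin_cases r <;> simp [Spoly, show ((0:Fin 3)+1 = 1) from rfl,
      show ((0:Fin 3)+2 = 2) from rfl, show ((1:Fin 3)+1 = 2) from rfl,
      show ((1:Fin 3)+2 = 0) from rfl, show ((2:Fin 3)+1 = 0) from rfl,
      show ((2:Fin 3)+2 = 1) from rfl] <;> ring
  rw [det_fin_two_of, a0]
  exact key (s r) (s (r + 1)) (s (r + 2)) (hs r).ne' (Spoly s) hS
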